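/- arXiv:2405.01442 — 12 statements merged into one kernel-verified Lean document; each statement's English description precedes it below -/
import Mathlib

section
/- Consider the price-taker storage profit maximization: maximize ∑_t λ_t(p_t − b_t) subject to ∑_t (p_t/η − b_t η) = 0 and 0 ≤ p_t, b_t ≤ P̄ for all t, with η ∈ (0,1) and P̄ > 0. If an optimal solution (p*, b*) is not identically zero (there exists t with p*_t > 0 or b*_t > 0), then the optimal profit is strictly positive only if there exist indices i, j with λ_i·η² > λ_j. -/
/-- Feasibility for the price-taker storage LP. -/
def StorageFeasible (T : ℕ) (η Pm : ℝ) (p b : Fin T → ℝ) : Prop :=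
  (∀ t, 0 ≤ p t ∧ p t ≤ Pm) ∧ (∀ t, 0 ≤ b t ∧ b t ≤ Pm) ∧
    (∑ t, (p t / η - b t * η)) = 0

/-- if an optimal, not-identically-zero solution of the
price-taker LP has strictly positive profit, then there exist indices
`i`, `j` with `λ i * η² > λ j`. -/
theorem taker_positive_profit_requires_arbitrage
    (T : ℕ) (η Pm : ℝ) (lam : Fin T → ℝ) (p b : Fin T → ℝ)
    (hη : 0 < η) (hη1 : η < 1) (hPm : 0 < Pm) (hlam : ∀ t, 0 ≤ lam t)
    (hfeas : StorageFeasible T η Pm p b)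
    (hopt : ∀ q c : Fin T → ℝ, StorageFeasible T η Pm q c →
      (∑ t, lam t * (q t - c t)) ≤ ∑ t, lam t * (p t - b t))
    (hnz : ∃ t, 0 < p t ∨ 0 < b t)
    (hpos : 0 < ∑ t, lam t * (p t - b t)) :
    ∃ i j, lam i * η ^ 2 > lam j := by
  by_contra hcon
  push_neg at hcon
  obtain ⟨hp, hb, hsum⟩ := hfeas
  obtain ⟨t0, _⟩ := hnz
  have hne : (Finset.univ : Finset (Fin T)).Nonempty := ⟨t0, Finset.mem_univ t0⟩
  obtain ⟨i, _, hi⟩ := Finset.exists_max_image Finset.univ lam hne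
  -- energy balance: ∑ p = η² ∑ b
  have hbal : (∑ t, p t) = η ^ 2 * ∑ t, b t := by
    have h1 : (∑ t, p t / η) = ∑ t, b t * η := by
      rw [Finset.sum_sub_distrib] at hsum
      linarith
    have h2 : (∑ t, p t) / η = (∑ t, b t) * η := by
      rw [Finset.sum_div, Finset.sum_mul]; exact h1
    field_simp at h2
    nlinarith [h2]
  have key : (∑ t, lam t * (p t - b t)) ≤ 0 := by
    have h3 : (∑ t, lam t * p t) ≤ lam i * ∑ t, p t := by
      rw [Finset.mul_sum]
      exact Finset.sum_le_sum fun t _ =>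
        mul_le_mul_of_nonneg_right (hi t (Finset.mem_univ t)) (hp t).1
    have h4 : lam i * (η ^ 2 * ∑ t, b t) ≤ ∑ t, lam t * b t := by
      rw [← mul_assoc, Finset.mul_sum]
      exact Finset.sum_le_sum fun t _ =>
        mul_le_mul_of_nonneg_right (hcon i t) (hb t).1
    have h5 : (∑ t, lam t * (p t - b t)) = (∑ t, lam t * p t) - ∑ t, lam t * b t := by
      rw [← Finset.sum_sub_distrib]
      exact Finset.sum_congr rfl fun t _ => by ring
    rw [h5, hbal] at *
    linarith
  linarith
end

section
/- In the two-interval price-taker model with prices λ_1, λ_2 ≥ 0, efficiency η ∈ (0,1), and power cap P̄ > 0: if λ_1 > λ_2/η², the schedule p_1 = P̄η², b_1 = 0, p_2 = 0, b_2 = P̄ is optimal; if λ_2·η² ≤ λ_1 ≤ λ_2/η², the all-zero schedule is optimal; if λ_1 < λ_2·η², the schedule p_1 = 0, b_1 = P̄, p_2 = P̄η², b_2 = 0 is optimal. Here optimality is with respect to maximizing λ_1(p_1−b_1) + λ_2(p_2−b_2) over feasible schedules. -/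
/-- Feasibility for the two-interval storage model. -/
def Feas2 (η Pm p1 b1 p2 b2 : ℝ) : Prop :=
  0 ≤ p1 ∧ p1 ≤ Pm ∧ 0 ≤ b1 ∧ b1 ≤ Pm ∧
  0 ≤ p2 ∧ p2 ≤ Pm ∧ 0 ≤ b2 ∧ b2 ≤ Pm ∧
  (p1 + p2) / η = (b1 + b2) * η

/-- Two-interval price-taker profit. -/
def Profit2 (l1 l2 p1 b1 p2 b2 : ℝ) : ℝ := l1 * (p1 - b1) + l2 * (p2 - b2)

/-- optimal price-taker control policy in the two-interval model,
in each of the three price regimes. -/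
theorem taker_two_interval_policy
    (η Pm l1 l2 : ℝ) (hη : 0 < η) (hη1 : η < 1) (hPm : 0 < Pm)
    (hl1 : 0 ≤ l1) (hl2 : 0 ≤ l2) :
    (l1 > l2 / η ^ 2 →
      Feas2 η Pm (Pm * η ^ 2) 0 0 Pm ∧
      ∀ p1 b1 p2 b2, Feas2 η Pm p1 b1 p2 b2 →
        Profit2 l1 l2 p1 b1 p2 b2 ≤ Profit2 l1 l2 (Pm * η ^ 2) 0 0 Pm) ∧
    (l2 * η ^ 2 ≤ l1 ∧ l1 ≤ l2 / η ^ 2 →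
      Feas2 η Pm 0 0 0 0 ∧
      ∀ p1 b1 p2 b2, Feas2 η Pm p1 b1 p2 b2 →
        Profit2 l1 l2 p1 b1 p2 b2 ≤ Profit2 l1 l2 0 0 0 0) ∧
    (l1 < l2 * η ^ 2 →
      Feas2 η Pm 0 Pm (Pm * η ^ 2) 0 ∧
      ∀ p1 b1 p2 b2, Feas2 η Pm p1 b1 p2 b2 →
        Profit2 l1 l2 p1 b1 p2 b2 ≤ Profit2 l1 l2 0 Pm (Pm * η ^ 2) 0) := by
  have hη2 : (0:ℝ) < η ^ 2 := by positivity
  have hη21 : η ^ 2 < 1 := by nlinarith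
  refine ⟨?_, ?_, ?_⟩
  · intro hgt
    have hl : l2 < l1 * η ^ 2 := by
      exact (div_lt_iff₀ hη2).mp hgt
    have hl12 : l2 ≤ l1 := by nlinarith
    constructor
    · refine ⟨by positivity, by nlinarith, le_refl 0, le_of_lt hPm,
        le_refl 0, le_of_lt hPm, le_of_lt hPm, le_refl Pm, ?_⟩
      field_simp; ring
    · rintro p1 b1 p2 b2 ⟨h1, h2, h3, h4, h5, h6, h7, h8, h9⟩
      have hc : p1 + p2 = (b1 + b2) * η ^ 2 := by
        rw [div_eq_iff hη.ne'] at h9; nlinarith [h9]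
      simp only [Profit2]
      nlinarith [mul_nonneg hl1 h3, mul_nonneg (sub_nonneg.2 hl12) h5,
        mul_nonneg (sub_nonneg.2 (le_of_lt hl)) (sub_nonneg.2 h8),
        mul_nonneg (mul_nonneg hl1 h3) (le_of_lt hη2)]
  · rintro ⟨ha, hb⟩
    have hb' : l1 * η ^ 2 ≤ l2 := by
      exact (le_div_iff₀ hη2).mp hb
    constructor
    · exact ⟨le_refl 0, le_of_lt hPm, le_refl 0, le_of_lt hPm,
        le_refl 0, le_of_lt hPm, le_refl 0, le_of_lt hPm, by simp⟩
    · rintro p1 b1 p2 b2 ⟨h1, h2, h3, h4, h5, h6, h7, h8, h9⟩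
      have hc : p1 + p2 = (b1 + b2) * η ^ 2 := by
        rw [div_eq_iff hη.ne'] at h9; nlinarith [h9]
      simp only [Profit2]
      rcases le_total l1 l2 with hle | hle
      · nlinarith [mul_nonneg (sub_nonneg.2 hle) h1, mul_nonneg (sub_nonneg.2 ha) h3,
          mul_nonneg (mul_nonneg hl2 h7) (sub_nonneg.2 hη21.le)]
      · nlinarith [mul_nonneg (sub_nonneg.2 hle) h5, mul_nonneg (sub_nonneg.2 hb') h7,
          mul_nonneg (mul_nonneg hl1 h3) (sub_nonneg.2 hη21.le)]
  · intro hlt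
    have hl : l1 < l2 * η ^ 2 := hlt
    have hl21 : l1 ≤ l2 := by nlinarith
    constructor
    · refine ⟨le_refl 0, le_of_lt hPm, le_of_lt hPm, le_refl Pm,
        by positivity, by nlinarith, le_refl 0, le_of_lt hPm, ?_⟩
      field_simp; ring
    · rintro p1 b1 p2 b2 ⟨h1, h2, h3, h4, h5, h6, h7, h8, h9⟩
      have hc : p1 + p2 = (b1 + b2) * η ^ 2 := by
        rw [div_eq_iff hη.ne'] at h9; nlinarith [h9]
      simp only [Profit2]
      have hc2 : l2 * (p1 + p2) = l2 * ((b1 + b2) * η ^ 2) := by rw [hc]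
      linarith [mul_nonneg (sub_nonneg.2 hl.le) (sub_nonneg.2 h4),
        mul_nonneg (mul_nonneg hl2 h7) (sub_nonneg.2 hη21.le),
        mul_nonneg (sub_nonneg.2 hl21) h1, hc2]
end

section
/- In the two-interval price-taker model, the optimal profit equals P̄·max(0, λ_1·η² − λ_2, λ_2·η² − λ_1) up to ordering: precisely, the maximum of λ_1(p_1−b_1)+λ_2(p_2−b_2) over feasible schedules equals P̄·max{0, η²λ_1 − λ_2, η²λ_2 − λ_1}. -/
namespace Feas2

variable {η Pm l1 l2 p1 b1 p2 b2 : ℝ}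

theorem swap (h : Feas2 η Pm p1 b1 p2 b2) : Feas2 η Pm p2 b2 p1 b1 := by
  obtain ⟨hp1, hp1', hb1, hb1', hp2, hp2', hb2, hb2', hbal⟩ := h
  exact ⟨hp2, hp2', hb2, hb2', hp1, hp1', hb1, hb1', by rw [add_comm, hbal, add_comm]⟩

theorem energy_balance (hη : η ≠ 0) (h : Feas2 η Pm p1 b1 p2 b2) :
    p1 + p2 = η ^ 2 * (b1 + b2) := by
  have hbal := h.2.2.2.2.2.2.2.2
  field_simp at hbal
  linarith

theorem profit_le (hη : η ≠ 0) (hη1 : η ^ 2 ≤ 1) (hl : l2 ≤ l1) (hl1 : 0 ≤ l1)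
    (h : Feas2 η Pm p1 b1 p2 b2) :
    l1 * (p1 - b1) + l2 * (p2 - b2) ≤ Pm * max 0 (η ^ 2 * l1 - l2) := by
  have hbal := h.energy_balance hη
  obtain ⟨-, -, hb1, -, hp2, -, hb2, hb2', -⟩ := h
  calc l1 * (p1 - b1) + l2 * (p2 - b2)
      ≤ l1 * (p1 + p2) - l1 * b1 - l2 * b2 := by linarith [mul_le_mul_of_nonneg_right hl hp2]
    _ = (η ^ 2 * l1 - l2) * b2 - (1 - η ^ 2) * l1 * b1 := by rw [hbal]; ring
    _ ≤ (η ^ 2 * l1 - l2) * b2 :=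
        sub_le_self _ (mul_nonneg (mul_nonneg (sub_nonneg.2 hη1) hl1) hb1)
    _ ≤ max 0 (η ^ 2 * l1 - l2) * b2 := by gcongr; exact le_max_right _ _
    _ ≤ max 0 (η ^ 2 * l1 - l2) * Pm := by gcongr
    _ = Pm * max 0 (η ^ 2 * l1 - l2) := mul_comm _ _

end Feas2

theorem feas2_idle {η Pm : ℝ} (hPm : 0 ≤ Pm) : Feas2 η Pm 0 0 0 0 := by
  refine ⟨le_rfl, hPm, le_rfl, hPm, le_rfl, hPm, le_rfl, hPm, ?_⟩
  simp

theorem feas2_charge_second {η Pm : ℝ} (hη : η ≠ 0) (hη1 : η ^ 2 ≤ 1) (hPm : 0 ≤ Pm) :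
    Feas2 η Pm (η ^ 2 * Pm) 0 0 Pm := by
  refine ⟨by positivity, mul_le_of_le_one_left hPm hη1, le_rfl, hPm, le_rfl, hPm, hPm, le_rfl, ?_⟩
  field_simp
  ring

theorem taker_two_interval_optimal_value_general
    (η Pm l1 l2 : ℝ) (hη : 0 < η) (hη1 : η < 1) (hPm : 0 < Pm)
    (hl1 : 0 ≤ l1) :
    IsGreatest {x : ℝ | ∃ p1 b1 p2 b2, Feas2 η Pm p1 b1 p2 b2 ∧
        x = l1 * (p1 - b1) + l2 * (p2 - b2)}
      (Pm * max 0 (max (η ^ 2 * l1 - l2) (η ^ 2 * l2 - l1))) := by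
  have hη0 : η ≠ 0 := hη.ne'
  have hη2 : η ^ 2 ≤ 1 := pow_le_one₀ hη.le hη1.le
  have hcharge := feas2_charge_second hη0 hη2 hPm.le
  constructor
  · refine max_rec' (fun m ↦ Pm * m ∈ _) ⟨0, 0, 0, 0, feas2_idle hPm.le, by ring⟩
      (max_rec' (fun m ↦ Pm * m ∈ _) ⟨_, _, _, _, hcharge, by ring⟩
        ⟨_, _, _, _, hcharge.swap, by ring⟩)
  · rintro _ ⟨p1, b1, p2, b2, h, rfl⟩
    rcases le_total l2 l1 with hl | hl
    · calc _ ≤ Pm * max 0 (η ^ 2 * l1 - l2) := h.profit_le hη0 hη2 hl hl1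
        _ ≤ _ := by gcongr; exact le_max_left _ _
    · calc _ = l2 * (p2 - b2) + l1 * (p1 - b1) := add_comm _ _
        _ ≤ Pm * max 0 (η ^ 2 * l2 - l1) := h.swap.profit_le hη0 hη2 hl (hl1.trans hl)
        _ ≤ _ := by gcongr; exact le_max_right _ _

/-- the optimal two-interval price-taker profit equals
`P̄ · max {0, η²λ₁ − λ₂, η²λ₂ − λ₁}`. -/
theorem taker_two_interval_optimal_value
    (η Pm l1 l2 : ℝ) (hη : 0 < η) (hη1 : η < 1) (hPm : 0 < Pm)
    (hl1 : 0 ≤ l1) (hl2 : 0 ≤ l2) :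
    IsGreatest {x : ℝ | ∃ p1 b1 p2 b2, Feas2 η Pm p1 b1 p2 b2 ∧
        x = l1 * (p1 - b1) + l2 * (p2 - b2)}
      (Pm * max 0 (max (η ^ 2 * l1 - l2) (η ^ 2 * l2 - l1))) :=
  taker_two_interval_optimal_value_general η Pm l1 l2 hη hη1 hPm hl1
end

section
/- For the price-taker storage linear program with strictly positive optimal profit, any optimal solution must have at least one interval at full capacity: there exists t with p*_t = P̄ or b*_t = P̄. Equivalently, if an optimal solution satisfies 0 ≤ p*_t < P̄ and 0 ≤ b*_t < P̄ for all t, then the optimal profit is zero (the unit might as well be idle). -/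
/-- Proposition 1: if an optimal price-taker solution has every
interval strictly below capacity, then the optimal profit is zero. -/
theorem taker_no_full_interval_zero_profit
    (T : ℕ) (η Pm : ℝ) (lam : Fin T → ℝ) (p b : Fin T → ℝ)
    (hη : 0 < η) (hη1 : η < 1) (hPm : 0 < Pm) (hlam : ∀ t, 0 ≤ lam t)
    (hfeas : StorageFeasible T η Pm p b)
    (hopt : ∀ q c : Fin T → ℝ, StorageFeasible T η Pm q c →
      (∑ t, lam t * (q t - c t)) ≤ ∑ t, lam t * (p t - b t))
    (hpartial : ∀ t, p t < Pm ∧ b t < Pm) :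
    (∑ t, lam t * (p t - b t)) = 0 := by
  classical
  obtain ⟨hp, hb, hsum⟩ := hfeas
  have h0 : StorageFeasible T η Pm (fun _ => 0) (fun _ => 0) :=
    ⟨fun t => ⟨le_refl 0, hPm.le⟩, fun t => ⟨le_refl 0, hPm.le⟩, by simp⟩
  have hge : 0 ≤ ∑ t, lam t * (p t - b t) := by
    have := hopt (fun _ => 0) (fun _ => 0) h0
    simpa using this
  rcases Nat.eq_zero_or_pos T with hT | hT
  · subst hT; simp
  have hne : Nonempty (Fin T) := ⟨⟨0, hT⟩⟩
  set m := Finset.univ.inf' Finset.univ_nonempty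
      (fun t => min (Pm - p t) (Pm - b t)) with hm
  have hmpos : 0 < m := by
    rw [hm, Finset.lt_inf'_iff]
    intro t _
    exact lt_min (by linarith [(hpartial t).1]) (by linarith [(hpartial t).2])
  set δ := m / Pm with hδ
  have hδpos : 0 < δ := div_pos hmpos hPm
  have hδPm : δ * Pm = m := div_mul_cancel₀ m hPm.ne'
  have hmle : ∀ t : Fin T, m ≤ min (Pm - p t) (Pm - b t) := fun t =>
    Finset.inf'_le _ (Finset.mem_univ t)
  have hfeas' : StorageFeasible T η Pm (fun t => (1 + δ) * p t)
      (fun t => (1 + δ) * b t) := by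
    refine ⟨fun t => ⟨?_, ?_⟩, fun t => ⟨?_, ?_⟩, ?_⟩
    · exact mul_nonneg (by linarith) (hp t).1
    · have h1 : δ * p t ≤ δ * Pm := mul_le_mul_of_nonneg_left (hp t).2 hδpos.le
      have h2 : m ≤ Pm - p t := (hmle t).trans (min_le_left _ _)
      show (1 + δ) * p t ≤ Pm
      nlinarith
    · exact mul_nonneg (by linarith) (hb t).1
    · have h1 : δ * b t ≤ δ * Pm := mul_le_mul_of_nonneg_left (hb t).2 hδpos.le
      have h2 : m ≤ Pm - b t := (hmle t).trans (min_le_right _ _)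
      show (1 + δ) * b t ≤ Pm
      nlinarith
    · have : ∑ t, ((1 + δ) * p t / η - (1 + δ) * b t * η)
          = (1 + δ) * ∑ t, (p t / η - b t * η) := by
        rw [Finset.mul_sum]; exact Finset.sum_congr rfl fun t _ => by ring
      rw [this, hsum, mul_zero]
  have hle := hopt _ _ hfeas'
  have heq : ∑ t, lam t * ((1 + δ) * p t - (1 + δ) * b t)
      = (1 + δ) * ∑ t, lam t * (p t - b t) := by
    rw [Finset.mul_sum]; exact Finset.sum_congr rfl fun t _ => by ring
  rw [heq] at hle
  nlinarith
end

section
/- Suppose (p*, b*) is an optimal solution of the price-taker storage LP with strictly positive profit, and suppose the maximum price is attained at a unique interval t_max and the minimum price at a unique interval t_min. Then p*_{t_max} = P̄ or b*_{t_min} = P̄: the unit operates at full capacity either at the highest-price interval (discharging) or at the lowest-price interval (charging). -/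
/-!
If neither `p tmax` nor `b tmin` is at capacity, move from `(p, b)` in the direction that puts
the total discharge `P = ∑ p` at `tmax` and the total charge `B = ∑ b` at `tmin`. The balance
constraint is kept because `P / η = B * η`, and the profit grows at rate
`λ_tmax P - λ_tmin B`, which dominates the current profit and is therefore positive;
a small step contradicts optimality.
-/

open Filter Topology

lemma exists_pos_add_mul_le {a c M : ℝ} (ha : a < M) (hc : c < M) (x y : ℝ) :
    ∃ ε > 0, a + ε * x ≤ M ∧ c + ε * y ≤ M := by
  have hlim : ∀ d z : ℝ, Tendsto (fun ε : ℝ => d + ε * z) (𝓝[>] 0) (𝓝 d) := fun d z =>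
    ((by fun_prop : Continuous fun ε : ℝ => d + ε * z).tendsto' 0 d (by simp)).mono_left
      nhdsWithin_le_nhds
  obtain ⟨ε, hε, hεx, hεy⟩ := (eventually_mem_nhdsWithin.and
    (((hlim a x).eventually_lt_const ha).and ((hlim c y).eventually_lt_const hc))).exists
  exact ⟨ε, hε, hεx.le, hεy.le⟩

lemma sum_div_sub_mul {T : ℕ} (η : ℝ) (p b : Fin T → ℝ) :
    ∑ t, (p t / η - b t * η) = (∑ t, p t) / η - (∑ t, b t) * η := by
  rw [Finset.sum_sub_distrib, Finset.sum_div, Finset.sum_mul]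

namespace StorageFeasible

variable {T : ℕ} {η Pm : ℝ} {p b : Fin T → ℝ}

lemma sum_div_eq (h : StorageFeasible T η Pm p b) : (∑ t, p t) / η = (∑ t, b t) * η :=
  sub_eq_zero.mp ((sum_div_sub_mul η p b).symm.trans h.2.2)

lemma add_single_mul_sum (h : StorageFeasible T η Pm p b) {s u : Fin T} {ε : ℝ} (hε : 0 ≤ ε)
    (hs : p s + ε * ∑ t, p t ≤ Pm) (hu : b u + ε * ∑ t, b t ≤ Pm) :
    StorageFeasible T η Pm (p + Pi.single s (ε * ∑ t, p t)) (b + Pi.single u (ε * ∑ t, b t)) := by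
  have hbal := h.sum_div_eq
  obtain ⟨hp, hb, -⟩ := h
  have hP : 0 ≤ ε * ∑ t, p t := mul_nonneg hε (Finset.sum_nonneg fun t _ => (hp t).1)
  have hB : 0 ≤ ε * ∑ t, b t := mul_nonneg hε (Finset.sum_nonneg fun t _ => (hb t).1)
  refine ⟨fun t => ?_, fun t => ?_, ?_⟩
  · rcases eq_or_ne t s with rfl | hts
    · simp only [Pi.add_apply, Pi.single_eq_same]; constructor <;> linarith [(hp t).1]
    · simpa [Pi.single_eq_of_ne hts] using hp t
  · rcases eq_or_ne t u with rfl | htu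
    · simp only [Pi.add_apply, Pi.single_eq_same]; constructor <;> linarith [(hb t).1]
    · simpa [Pi.single_eq_of_ne htu] using hb t
  · rw [sum_div_sub_mul]
    simp only [Pi.add_apply, Finset.sum_add_distrib, Finset.sum_pi_single', Finset.mem_univ,
      if_true]
    linear_combination (1 + ε) * hbal

end StorageFeasible

lemma sum_mul_sub_add_single {ι : Type*} [Fintype ι] [DecidableEq ι] (w x y : ι → ℝ)
    (s u : ι) (a c : ℝ) :
    ∑ t, w t * ((x + Pi.single s a : ι → ℝ) t - (y + Pi.single u c : ι → ℝ) t)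
      = ∑ t, w t * (x t - y t) + (w s * a - w u * c) := by
  simp only [Pi.add_apply, mul_sub, mul_add, Finset.sum_sub_distrib, Finset.sum_add_distrib,
    Pi.single_apply, mul_ite, mul_zero, Finset.sum_ite_eq', Finset.mem_univ, if_true]
  ring

lemma sum_mul_sub_le_of_forall_le {ι : Type*} [Fintype ι] {w x y : ι → ℝ} {s u : ι}
    (hs : ∀ t, w t ≤ w s) (hu : ∀ t, w u ≤ w t) (hx : ∀ t, 0 ≤ x t) (hy : ∀ t, 0 ≤ y t) :
    ∑ t, w t * (x t - y t) ≤ w s * ∑ t, x t - w u * ∑ t, y t := by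
  rw [Finset.mul_sum, Finset.mul_sum, ← Finset.sum_sub_distrib]
  refine Finset.sum_le_sum fun t _ => ?_
  nlinarith [mul_le_mul_of_nonneg_right (hs t) (hx t), mul_le_mul_of_nonneg_right (hu t) (hy t)]

theorem taker_full_capacity_at_extreme_price_general
    (T : ℕ) (η Pm : ℝ) (lam : Fin T → ℝ) (p b : Fin T → ℝ) (tmax tmin : Fin T)
    (hmax : ∀ t, t ≠ tmax → lam t < lam tmax)
    (hmin : ∀ t, t ≠ tmin → lam tmin < lam t)
    (hfeas : StorageFeasible T η Pm p b)
    (hopt : ∀ q c : Fin T → ℝ, StorageFeasible T η Pm q c →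
      (∑ t, lam t * (q t - c t)) ≤ ∑ t, lam t * (p t - b t))
    (hpos : 0 < ∑ t, lam t * (p t - b t)) :
    p tmax = Pm ∨ b tmin = Pm := by
  by_contra! hslack
  obtain ⟨ε, hε, hεp, hεb⟩ := exists_pos_add_mul_le ((hfeas.1 tmax).2.lt_of_ne hslack.1)
    ((hfeas.2.1 tmin).2.lt_of_ne hslack.2) (∑ t, p t) (∑ t, b t)
  have hgain : ∑ t, lam t * (p t - b t) ≤ lam tmax * ∑ t, p t - lam tmin * ∑ t, b t := by
    refine sum_mul_sub_le_of_forall_le (fun t => ?_) (fun t => ?_) (fun t => (hfeas.1 t).1)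
      (fun t => (hfeas.2.1 t).1)
    · rcases eq_or_ne t tmax with rfl | h
      exacts [le_rfl, (hmax t h).le]
    · rcases eq_or_ne t tmin with rfl | h
      exacts [le_rfl, (hmin t h).le]
  have himprove := hopt _ _ (hfeas.add_single_mul_sum hε.le hεp hεb)
  rw [sum_mul_sub_add_single] at himprove
  nlinarith [mul_pos hε (hpos.trans_le hgain)]

/-- Proposition 2, part 2: with a unique highest-price interval
`tmax` and a unique lowest-price interval `tmin`, any optimal solution with
strictly positive profit operates at capacity at `tmax` (discharging) or at
`tmin` (charging). -/
theorem taker_full_capacity_at_extreme_price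
    (T : ℕ) (η Pm : ℝ) (lam : Fin T → ℝ) (p b : Fin T → ℝ) (tmax tmin : Fin T)
    (hη : 0 < η) (hη1 : η < 1) (hPm : 0 < Pm) (hlam : ∀ t, 0 ≤ lam t)
    (hmax : ∀ t, t ≠ tmax → lam t < lam tmax)
    (hmin : ∀ t, t ≠ tmin → lam tmin < lam t)
    (hfeas : StorageFeasible T η Pm p b)
    (hopt : ∀ q c : Fin T → ℝ, StorageFeasible T η Pm q c →
      (∑ t, lam t * (q t - c t)) ≤ ∑ t, lam t * (p t - b t))
    (hpos : 0 < ∑ t, lam t * (p t - b t)) :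
    p tmax = Pm ∨ b tmin = Pm :=
  taker_full_capacity_at_extreme_price_general T η Pm lam p b tmax tmin hmax hmin hfeas hopt hpos
end

section
/- Let (p*, b*) be optimal for the price-taker storage LP with multiplier θ for the balance constraint satisfying the KKT conditions. If interval u is a discharge-withholding interval (0 < p*_u < P̄) and interval x discharges at capacity (p*_x = P̄), then λ_x ≥ λ_u. If additionally interval v is a charge-withholding interval (0 < b*_v < P̄), then λ_x ≥ λ_v/η². -/
/-!
Stationarity expresses every price through the balance multiplier θ and the box multipliers:
`λ t = -θ/η + δp t - δm t` on the discharge side and `λ t = -θη + βm t - βp t` on the charge side.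
Complementary slackness kills both box multipliers at a strictly interior decision, and kills `δm`
at any positive discharge. Hence `λ u = -θ/η`, `λ v = -θη = η² · (-θ/η)`, and
`λ x = -θ/η + δp x ≥ -θ/η`.
-/

/-- KKT conditions for the price-taker storage LP: stationarity, primal box
feasibility, dual feasibility, and complementary slackness. -/
def StorageKKT (T : ℕ) (η Pm : ℝ) (lam p b : Fin T → ℝ) (θ : ℝ)
    (δm δp βm βp : Fin T → ℝ) : Prop :=
  (∀ t, lam t + θ / η + δm t - δp t = 0) ∧
  (∀ t, -lam t - θ * η + βm t - βp t = 0) ∧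
  (∑ t, (p t / η - b t * η)) = 0 ∧
  (∀ t, 0 ≤ p t ∧ p t ≤ Pm) ∧ (∀ t, 0 ≤ b t ∧ b t ≤ Pm) ∧
  (∀ t, 0 ≤ δm t ∧ 0 ≤ δp t ∧ 0 ≤ βm t ∧ 0 ≤ βp t) ∧
  (∀ t, δm t * p t = 0 ∧ δp t * (p t - Pm) = 0) ∧
  (∀ t, βm t * b t = 0 ∧ βp t * (b t - Pm) = 0)

namespace StorageKKT

variable {T : ℕ} {η Pm θ : ℝ} {lam p b δm δp βm βp : Fin T → ℝ}

theorem price_eq_of_discharge_interior (h : StorageKKT T η Pm lam p b θ δm δp βm βp)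
    {u : Fin T} (hu : 0 < p u ∧ p u < Pm) : lam u = -(θ / η) := by
  obtain ⟨hstat, -, -, -, -, -, hcs, -⟩ := h
  have hδm : δm u = 0 := eq_zero_of_ne_zero_of_mul_right_eq_zero hu.1.ne' (hcs u).1
  have hδp : δp u = 0 :=
    eq_zero_of_ne_zero_of_mul_right_eq_zero (sub_ne_zero.mpr hu.2.ne) (hcs u).2
  linarith [hstat u]

theorem price_ge_of_discharge_pos (h : StorageKKT T η Pm lam p b θ δm δp βm βp)
    {x : Fin T} (hx : 0 < p x) : -(θ / η) ≤ lam x := by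
  obtain ⟨hstat, -, -, -, -, hdual, hcs, -⟩ := h
  have hδm : δm x = 0 := eq_zero_of_ne_zero_of_mul_right_eq_zero hx.ne' (hcs x).1
  linarith [hstat x, (hdual x).2.1]

theorem price_eq_of_charge_interior (h : StorageKKT T η Pm lam p b θ δm δp βm βp)
    {v : Fin T} (hv : 0 < b v ∧ b v < Pm) : lam v = -(θ * η) := by
  obtain ⟨-, hstat, -, -, -, -, -, hcs⟩ := h
  have hβm : βm v = 0 := eq_zero_of_ne_zero_of_mul_right_eq_zero hv.1.ne' (hcs v).1
  have hβp : βp v = 0 :=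
    eq_zero_of_ne_zero_of_mul_right_eq_zero (sub_ne_zero.mpr hv.2.ne) (hcs v).2
  linarith [hstat v]

end StorageKKT

theorem taker_price_decision_discharge_capacity_general
    (T : ℕ) (η Pm : ℝ) (lam p b : Fin T → ℝ) (θ : ℝ)
    (δm δp βm βp : Fin T → ℝ)
    (hη : 0 < η) (hPm : 0 < Pm)
    (hkkt : StorageKKT T η Pm lam p b θ δm δp βm βp)
    (u x : Fin T) (hu : 0 < p u ∧ p u < Pm) (hx : p x = Pm) :
    lam x ≥ lam u ∧
      (∀ v : Fin T, 0 < b v ∧ b v < Pm → lam x ≥ lam v / η ^ 2) := by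
  have hθx := hkkt.price_ge_of_discharge_pos (hx ▸ hPm)
  refine ⟨hkkt.price_eq_of_discharge_interior hu ▸ hθx, fun v hv => ?_⟩
  have hθv : lam v / η ^ 2 = -(θ / η) := by
    rw [hkkt.price_eq_of_charge_interior hv]
    field_simp
  exact hθv ▸ hθx

/-- Proposition 5, part 1: at a KKT point, a discharge-at-capacity
interval `x` has price at least that of any discharge-withholding interval `u`,
and at least `λ v / η²` for any charge-withholding interval `v`. -/
theorem taker_price_decision_discharge_capacity
    (T : ℕ) (η Pm : ℝ) (lam p b : Fin T → ℝ) (θ : ℝ)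
    (δm δp βm βp : Fin T → ℝ)
    (hη : 0 < η) (hη1 : η < 1) (hPm : 0 < Pm) (hlam : ∀ t, 0 ≤ lam t)
    (hkkt : StorageKKT T η Pm lam p b θ δm δp βm βp)
    (u x : Fin T) (hu : 0 < p u ∧ p u < Pm) (hx : p x = Pm) :
    lam x ≥ lam u ∧
      (∀ v : Fin T, 0 < b v ∧ b v < Pm → lam x ≥ lam v / η ^ 2) :=
  taker_price_decision_discharge_capacity_general T η Pm lam p b θ δm δp βm βp hη hPm hkkt u x hu hx
end

section
/- Let (p*, b*) be optimal for the price-taker storage LP with KKT multipliers. If interval y charges at capacity (b*_y = P̄) and interval u is a discharge-withholding interval (0 < p*_u < P̄), then λ_u ≥ λ_y/η². If interval v is a charge-withholding interval (0 < b*_v < P̄), then λ_v ≥ λ_y. -/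
/-- Proposition 5, part 2: at a KKT point, a charge-at-capacity
interval `y` satisfies `λ u ≥ λ y / η²` for any discharge-withholding interval
`u`, and `λ v ≥ λ y` for any charge-withholding interval `v`. -/
theorem taker_price_decision_charge_capacity
    (T : ℕ) (η Pm : ℝ) (lam p b : Fin T → ℝ) (θ : ℝ)
    (δm δp βm βp : Fin T → ℝ)
    (hη : 0 < η) (hη1 : η < 1) (hPm : 0 < Pm) (hlam : ∀ t, 0 ≤ lam t)
    (hkkt : StorageKKT T η Pm lam p b θ δm δp βm βp)
    (y : Fin T) (hy : b y = Pm) :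
    (∀ u : Fin T, 0 < p u ∧ p u < Pm → lam u ≥ lam y / η ^ 2) ∧
      (∀ v : Fin T, 0 < b v ∧ b v < Pm → lam v ≥ lam y) := by
  obtain ⟨hs1, hs2, _, hp, hb, hdual, hcsp, hcsb⟩ := hkkt
  -- βm y = 0 since b y = Pm > 0
  have hβm : βm y = 0 := by
    have := (hcsb y).1
    rw [hy] at this
    rcases mul_eq_zero.mp this with h | h
    · exact h
    · exact absurd h (ne_of_gt hPm)
  have hθ : θ * η ≤ -lam y := by
    have h2 := hs2 y
    have := (hdual y).2.2.2
    nlinarith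
  constructor
  · intro u ⟨hu1, hu2⟩
    have hδm : δm u = 0 := by
      rcases mul_eq_zero.mp (hcsp u).1 with h | h
      · exact h
      · exact absurd h (ne_of_gt hu1)
    have hδp : δp u = 0 := by
      rcases mul_eq_zero.mp (hcsp u).2 with h | h
      · exact h
      · exact absurd h (ne_of_lt (by linarith))
    have h1 := hs1 u
    rw [hδm, hδp] at h1
    have : lam u = -θ / η := by field_simp at h1 ⊢; linarith
    rw [this, ge_iff_le, div_le_div_iff₀ (by positivity) hη]
    nlinarith
  · intro v ⟨hv1, hv2⟩
    have hβmv : βm v = 0 := by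
      rcases mul_eq_zero.mp (hcsb v).1 with h | h
      · exact h
      · exact absurd h (ne_of_gt hv1)
    have hβpv : βp v = 0 := by
      rcases mul_eq_zero.mp (hcsb v).2 with h | h
      · exact h
      · exact absurd h (ne_of_lt (by linarith))
    have h2 := hs2 v
    rw [hβmv, hβpv] at h2
    linarith
end

section
/- Let (p*, b*) be optimal for the price-taker storage LP with KKT multipliers. If interval z is idle (p*_z = b*_z = 0), interval u is a discharge-withholding interval (0 < p*_u < P̄), and interval v is a charge-withholding interval (0 < b*_v < P̄), then λ_z/η² ≥ λ_u ≥ λ_z and λ_z ≥ λ_v ≥ λ_z·η². -/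
namespace StorageKKT

variable {T : ℕ} {η Pm : ℝ} {lam p b : Fin T → ℝ} {θ : ℝ} {δm δp βm βp : Fin T → ℝ} {t : Fin T}

theorem price_le_of_discharge_lt_max (h : StorageKKT T η Pm lam p b θ δm δp βm βp)
    (ht : p t < Pm) : lam t ≤ -θ / η := by
  obtain ⟨hstat, -, -, -, -, hdual, hslack, -⟩ := h
  have hδp : δp t = 0 := (mul_eq_zero.1 (hslack t).2).resolve_right (sub_ne_zero.2 ht.ne)
  rw [neg_div]
  linarith [hstat t, (hdual t).1]

theorem le_price_of_discharge_pos (h : StorageKKT T η Pm lam p b θ δm δp βm βp)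
    (ht : 0 < p t) : -θ / η ≤ lam t := by
  obtain ⟨hstat, -, -, -, -, hdual, hslack, -⟩ := h
  have hδm : δm t = 0 := (mul_eq_zero.1 (hslack t).1).resolve_right ht.ne'
  rw [neg_div]
  linarith [hstat t, (hdual t).2.1]

theorem le_price_of_charge_lt_max (h : StorageKKT T η Pm lam p b θ δm δp βm βp)
    (ht : b t < Pm) : -θ * η ≤ lam t := by
  obtain ⟨-, hstat, -, -, -, hdual, -, hslack⟩ := h
  have hβp : βp t = 0 := (mul_eq_zero.1 (hslack t).2).resolve_right (sub_ne_zero.2 ht.ne)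
  linarith [hstat t, (hdual t).2.2.1]

theorem price_le_of_charge_pos (h : StorageKKT T η Pm lam p b θ δm δp βm βp)
    (ht : 0 < b t) : lam t ≤ -θ * η := by
  obtain ⟨-, hstat, -, -, -, hdual, -, hslack⟩ := h
  have hβm : βm t = 0 := (mul_eq_zero.1 (hslack t).1).resolve_right ht.ne'
  linarith [hstat t, (hdual t).2.2.2]

end StorageKKT

theorem taker_price_decision_idle_general
    (T : ℕ) (η Pm : ℝ) (lam p b : Fin T → ℝ) (θ : ℝ)
    (δm δp βm βp : Fin T → ℝ)
    (hη : 0 < η) (hPm : 0 < Pm)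
    (hkkt : StorageKKT T η Pm lam p b θ δm δp βm βp)
    (z u v : Fin T) (hz : p z = 0 ∧ b z = 0)
    (hu : 0 < p u ∧ p u < Pm) (hv : 0 < b v ∧ b v < Pm) :
    (lam z / η ^ 2 ≥ lam u ∧ lam u ≥ lam z) ∧
      (lam z ≥ lam v ∧ lam v ≥ lam z * η ^ 2) := by
  have hu_eq : lam u = -θ / η :=
    le_antisymm (hkkt.price_le_of_discharge_lt_max hu.2) (hkkt.le_price_of_discharge_pos hu.1)
  have hv_eq : lam v = -θ * η :=
    le_antisymm (hkkt.price_le_of_charge_pos hv.1) (hkkt.le_price_of_charge_lt_max hv.2)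
  have hz_le : lam z ≤ -θ / η := hkkt.price_le_of_discharge_lt_max (hz.1 ▸ hPm)
  have hz_ge : -θ * η ≤ lam z := hkkt.le_price_of_charge_lt_max (hz.2 ▸ hPm)
  have hscale : -θ * η = -θ / η * η ^ 2 := by field_simp
  refine ⟨⟨?_, by linarith⟩, by linarith, ?_⟩
  · rw [ge_iff_le, le_div_iff₀ (by positivity), hu_eq, ← hscale]
    exact hz_ge
  · rw [hv_eq, hscale]
    exact mul_le_mul_of_nonneg_right hz_le (sq_nonneg η)

/-- Proposition 5, part 3: at a KKT point, an idle interval `z`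
has its price sandwiched relative to the prices of a discharge-withholding
interval `u` and a charge-withholding interval `v`:
`λ z / η² ≥ λ u ≥ λ z` and `λ z ≥ λ v ≥ λ z · η²`. -/
theorem taker_price_decision_idle
    (T : ℕ) (η Pm : ℝ) (lam p b : Fin T → ℝ) (θ : ℝ)
    (δm δp βm βp : Fin T → ℝ)
    (hη : 0 < η) (hη1 : η < 1) (hPm : 0 < Pm) (hlam : ∀ t, 0 ≤ lam t)
    (hkkt : StorageKKT T η Pm lam p b θ δm δp βm βp)
    (z u v : Fin T) (hz : p z = 0 ∧ b z = 0)
    (hu : 0 < p u ∧ p u < Pm) (hv : 0 < b v ∧ b v < Pm) :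
    (lam z / η ^ 2 ≥ lam u ∧ lam u ≥ lam z) ∧
      (lam z ≥ lam v ∧ lam v ≥ lam z * η ^ 2) :=
  taker_price_decision_idle_general T η Pm lam p b θ δm δp βm βp hη hPm hkkt z u v hz hu hv
end

section
/- In the two-interval price-maker model with nominal prices λ̄_1 > λ̄_2/η² and sensitivities α_1, α_2 > 0, if the marginal-revenue condition λ̄_1 − 2α_1 P̄ η² < (λ̄_2 + 2α_2 P̄)/η² holds, then the schedule p_1 = (λ̄_1 − λ̄_2/η²)/(2(α_1 + α_2/η⁴)), b_1 = 0, p_2 = 0, b_2 = p_1/η² maximizes the price-maker profit (λ̄_1 − α_1(p_1 − b_1))(p_1 − b_1) + (λ̄_2 − α_2(p_2 − b_2))(p_2 − b_2) over feasible schedules, and this optimal schedule satisfies 0 < p_1 < P̄η² (strict partial-capacity withholding). -/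
/-- Two-interval price-maker profit with price sensitivities α₁, α₂. -/
def MakerProfit2 (l1 l2 a1 a2 p1 b1 p2 b2 : ℝ) : ℝ :=
  (l1 - a1 * (p1 - b1)) * (p1 - b1) + (l2 - a2 * (p2 - b2)) * (p2 - b2)

/-- in the interior-withholding regime, the interior schedule
`p₁ = (λ̄₁ − λ̄₂/η²)/(2(α₁ + α₂/η⁴))`, `b₂ = p₁/η²` is optimal for the price
maker, and it strictly withholds capacity: `0 < p₁ < P̄η²`. -/
theorem maker_interior_withholding_optimal
    (η Pm l1 l2 a1 a2 : ℝ) (hη : 0 < η) (hη1 : η < 1) (hPm : 0 < Pm)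
    (hl1 : 0 ≤ l1) (hl2 : 0 ≤ l2) (ha1 : 0 < a1) (ha2 : 0 < a2)
    (hspread : l1 > l2 / η ^ 2)
    (hmr : l1 - 2 * a1 * Pm * η ^ 2 < (l2 + 2 * a2 * Pm) / η ^ 2) :
    let p1 := (l1 - l2 / η ^ 2) / (2 * (a1 + a2 / η ^ 4))
    Feas2 η Pm p1 0 0 (p1 / η ^ 2) ∧
    (∀ q1 c1 q2 c2, Feas2 η Pm q1 c1 q2 c2 →
      MakerProfit2 l1 l2 a1 a2 q1 c1 q2 c2 ≤
        MakerProfit2 l1 l2 a1 a2 p1 0 0 (p1 / η ^ 2)) ∧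
    0 < p1 ∧ p1 < Pm * η ^ 2 := by
  intro p1
  have he2 : (0:ℝ) < η ^ 2 := by positivity
  have he4 : (0:ℝ) < η ^ 4 := by positivity
  have hD : (0:ℝ) < 2 * (a1 + a2 / η ^ 4) := by positivity
  have hnum : 0 < l1 - l2 / η ^ 2 := by linarith
  have hp1 : 0 < p1 := div_pos hnum hD
  have hkey : l1 * η ^ 4 - l2 * η ^ 2 = p1 * (2 * a1 * η ^ 4 + 2 * a2) := by
    have : p1 * (2 * (a1 + a2 / η ^ 4)) = l1 - l2 / η ^ 2 :=
      div_mul_cancel₀ _ (ne_of_gt hD)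
    field_simp at this ⊢
    nlinarith [this]
  clear_value p1
  have hmr' : (l1 - 2 * a1 * Pm * η ^ 2) * η ^ 2 < l2 + 2 * a2 * Pm := by
    rw [lt_div_iff₀ he2] at hmr; linarith
  have hpos2 : (0:ℝ) < 2 * a1 * η ^ 4 + 2 * a2 := by positivity
  have hub : p1 < Pm * η ^ 2 := by
    have h5 : p1 * (2 * a1 * η ^ 4 + 2 * a2) < Pm * η ^ 2 * (2 * a1 * η ^ 4 + 2 * a2) := by
      nlinarith [mul_lt_mul_of_pos_right hmr' he2]
    exact lt_of_mul_lt_mul_right h5 hpos2.le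
  have hel1 : η ^ 2 < 1 := by nlinarith
  set s := p1 / η ^ 2 with hs_def
  have hs : s * η ^ 2 = p1 := div_mul_cancel₀ _ (ne_of_gt he2)
  have hs_pos : 0 < s := div_pos hp1 he2
  have hs_lt : s < Pm := by
    rw [hs_def, div_lt_iff₀ he2]; linarith
  have hp1_lt : p1 < Pm := by nlinarith [mul_lt_mul_of_pos_left hel1 hPm]
  have hmu_eq' : (l1 - 2 * a1 * p1) * η ^ 2 = l2 + 2 * a2 * s := by
    have h6 : ((l1 - 2 * a1 * p1) * η ^ 2) * η ^ 2 = (l2 + 2 * a2 * s) * η ^ 2 := by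
      linear_combination hkey - 2 * a2 * hs
    exact mul_right_cancel₀ (ne_of_gt he2) h6
  have hmu : 0 ≤ l1 - 2 * a1 * p1 := by nlinarith [hs_pos, hmu_eq', he2]
  refine ⟨?_, ?_, hp1, hub⟩
  · refine ⟨hp1.le, hp1_lt.le, le_refl 0, hPm.le, le_refl 0, hPm.le, hs_pos.le, hs_lt.le, ?_⟩
    rw [div_eq_iff (ne_of_gt hη)]
    show p1 + 0 = (0 + s) * η * η
    linear_combination -hs
  · intro q1 c1 q2 c2 hF
    obtain ⟨hq1, _, hc1, _, hq2, _, hc2, _, hbalF⟩ := hF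
    have hbal : q1 + q2 = (c1 + c2) * η ^ 2 := by
      rw [div_eq_iff (ne_of_gt hη)] at hbalF
      linear_combination hbalF
    unfold MakerProfit2
    have h1 : 0 ≤ a1 * (q1 - c1 - p1) ^ 2 := by positivity
    have h2 : 0 ≤ a2 * (q2 - c2 + s) ^ 2 := by positivity
    have h3 : 0 ≤ (l1 - 2 * a1 * p1) * ((1 - η ^ 2) * (q2 + c1)) :=
      mul_nonneg hmu (mul_nonneg (by linarith) (by linarith))
    have hm2 : (l2 + 2 * a2 * s) * (q2 - c2 + s) = (l1 - 2 * a1 * p1) * η ^ 2 * (q2 - c2 + s) := by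
      rw [hmu_eq']
    have hs2 : (l1 - 2 * a1 * p1) * p1 = (l1 - 2 * a1 * p1) * (s * η ^ 2) := by rw [hs]
    have hb2 : (l1 - 2 * a1 * p1) * (q1 + q2) = (l1 - 2 * a1 * p1) * ((c1 + c2) * η ^ 2) := by
      rw [hbal]
    linarith [h1, h2, h3, hm2, hs2, hb2]
end

section
/- In the two-interval price-maker model with nominal prices satisfying λ̄_2·η² ≤ λ̄_1 ≤ λ̄_2/η², the all-zero schedule p_1 = b_1 = p_2 = b_2 = 0 maximizes the price-maker profit ∑_{t=1,2} (λ̄_t − α_t(p_t − b_t))(p_t − b_t) over feasible schedules. -/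
/-- when `λ̄₂η² ≤ λ̄₁ ≤ λ̄₂/η²`, the all-zero schedule maximizes
the two-interval price-maker profit. -/
theorem maker_idle_optimal
    (η Pm l1 l2 a1 a2 : ℝ) (hη : 0 < η) (hη1 : η < 1) (hPm : 0 < Pm)
    (hl1 : 0 ≤ l1) (hl2 : 0 ≤ l2) (ha1 : 0 ≤ a1) (ha2 : 0 ≤ a2)
    (hlo : l2 * η ^ 2 ≤ l1) (hhi : l1 ≤ l2 / η ^ 2) :
    Feas2 η Pm 0 0 0 0 ∧
    ∀ q1 c1 q2 c2, Feas2 η Pm q1 c1 q2 c2 →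
      MakerProfit2 l1 l2 a1 a2 q1 c1 q2 c2 ≤
        MakerProfit2 l1 l2 a1 a2 0 0 0 0 := by
  constructor
  · refine ⟨le_refl 0, hPm.le, le_refl 0, hPm.le, le_refl 0, hPm.le, le_refl 0, hPm.le, by simp⟩
  · rintro q1 c1 q2 c2 ⟨hq1, hq1m, hc1, hc1m, hq2, hq2m, hc2, hc2m, hcon⟩
    have hη2 : (0:ℝ) < η ^ 2 := by positivity
    have hsum : q1 + q2 = (c1 + c2) * η ^ 2 := by
      field_simp at hcon
      nlinarith [hcon]
    have hhi' : l1 * η ^ 2 ≤ l2 := (le_div_iff₀ hη2).mp hhi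
    simp only [MakerProfit2]
    have key : l1 * (q1 - c1) + l2 * (q2 - c2) ≤ 0 := by
      rcases le_total l1 l2 with h | h
      · nlinarith [mul_nonneg (sub_nonneg.2 h) hc2, mul_nonneg hl2 hq1,
          mul_nonneg hl2 hq2, mul_nonneg (sub_nonneg.2 h) hc1,
          mul_nonneg (mul_nonneg hc1 (sub_nonneg.2 hlo)) (le_of_lt hη2),
          mul_nonneg (mul_nonneg hc2 (sub_nonneg.2 hlo)) (le_of_lt hη2),
          mul_nonneg hc1 (sub_nonneg.2 hlo), mul_nonneg hc2 (sub_nonneg.2 hlo)]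
      · nlinarith [mul_nonneg (sub_nonneg.2 h) hq2, mul_nonneg (sub_nonneg.2 h) hq1,
          mul_nonneg hl1 hc1, mul_nonneg hl1 hc2,
          mul_nonneg hc1 (sub_nonneg.2 hhi'), mul_nonneg hc2 (sub_nonneg.2 hhi')]
    nlinarith [mul_self_nonneg (q1 - c1), mul_self_nonneg (q2 - c2),
      mul_nonneg ha1 (mul_self_nonneg (q1 - c1)),
      mul_nonneg ha2 (mul_self_nonneg (q2 - c2)), key]
end

section
/- In the two-interval price-maker model with λ̄_1 > λ̄_2/η², if λ̄_1 − 2α_1 P̄η² ≥ (λ̄_2 + 2α_2 P̄)/η², then the full-capacity schedule p_1 = P̄η², b_1 = 0, p_2 = 0, b_2 = P̄ maximizes the price-maker profit ∑_t (λ̄_t − α_t(p_t − b_t))(p_t − b_t), i.e., with sufficiently large nominal price spread, the price maker's optimal strategy coincides with the price taker's full-capacity arbitrage. -/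
/-- when the nominal price spread is large enough
(`λ̄₁ − 2α₁P̄η² ≥ (λ̄₂ + 2α₂P̄)/η²`), the full-capacity arbitrage schedule
`p₁ = P̄η², b₂ = P̄` is optimal for the price maker. -/
theorem maker_full_capacity_optimal
    (η Pm l1 l2 a1 a2 : ℝ) (hη : 0 < η) (hη1 : η < 1) (hPm : 0 < Pm)
    (hl1 : 0 ≤ l1) (hl2 : 0 ≤ l2) (ha1 : 0 ≤ a1) (ha2 : 0 ≤ a2)
    (hspread : l1 > l2 / η ^ 2)
    (hmr : l1 - 2 * a1 * Pm * η ^ 2 ≥ (l2 + 2 * a2 * Pm) / η ^ 2) :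
    Feas2 η Pm (Pm * η ^ 2) 0 0 Pm ∧
    ∀ q1 c1 q2 c2, Feas2 η Pm q1 c1 q2 c2 →
      MakerProfit2 l1 l2 a1 a2 q1 c1 q2 c2 ≤
        MakerProfit2 l1 l2 a1 a2 (Pm * η ^ 2) 0 0 Pm := by
  have hη2 : (0:ℝ) < η ^ 2 := by positivity
  have hηne : η ≠ 0 := ne_of_gt hη
  constructor
  · refine ⟨by positivity, ?_, le_refl 0, hPm.le, le_refl 0, hPm.le, hPm.le, le_refl Pm, ?_⟩
    · nlinarith [mul_pos (by linarith : (0:ℝ) < 1 - η) (by linarith : (0:ℝ) < 1 + η)]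
    · field_simp
      ring
  · intro q1 c1 q2 c2 hf
    obtain ⟨hq1, hq1', hc1, hc1', hq2, hq2', hc2, hc2', hc⟩ := hf
    -- constraint in polynomial form
    have hcon : q1 + q2 = (c1 + c2) * η ^ 2 := by
      have := hc
      field_simp at this
      linarith [this]
    -- key inequality: x + η² y ≤ 0
    have hkey : (q1 - c1) + η ^ 2 * (q2 - c2) ≤ 0 := by
      have : (q1 - c1) + η ^ 2 * (q2 - c2) = (η ^ 2 - 1) * (c1 + q2) := by
        nlinarith [hcon]
      rw [this]
      have h1 : η ^ 2 - 1 ≤ 0 := by nlinarith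
      have h2 : 0 ≤ c1 + q2 := by linarith
      nlinarith
    -- B ≥ 0, Aη² ≥ B, A ≥ 0
    have hB : (0:ℝ) ≤ l2 + 2 * a2 * Pm := by nlinarith
    have hAB : (l1 - 2 * a1 * Pm * η ^ 2) * η ^ 2 ≥ l2 + 2 * a2 * Pm := by
      have := (div_le_iff₀ hη2).mp hmr
      linarith
    have hA : (0:ℝ) ≤ l1 - 2 * a1 * Pm * η ^ 2 := by nlinarith
    have hvpos : 0 ≤ (q2 - c2) + Pm := by linarith
    have huv : η ^ 2 * ((q2 - c2) + Pm) ≤ Pm * η ^ 2 - (q1 - c1) := by linarith [hkey]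
    have hupos : 0 ≤ Pm * η ^ 2 - (q1 - c1) := by
      have := mul_nonneg hη2.le hvpos
      linarith
    clear hc hcon hkey hmr hspread
    have h1 : 0 ≤ (l1 - 2 * a1 * Pm * η ^ 2) *
        ((Pm * η ^ 2 - (q1 - c1)) - η ^ 2 * ((q2 - c2) + Pm)) :=
      mul_nonneg hA (by linarith)
    have h2 : 0 ≤ ((l1 - 2 * a1 * Pm * η ^ 2) * η ^ 2 - (l2 + 2 * a2 * Pm)) *
        ((q2 - c2) + Pm) :=
      mul_nonneg (by linarith) hvpos
    have h3 : 0 ≤ a1 * (Pm * η ^ 2 - (q1 - c1)) ^ 2 := by positivity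
    have h4 : 0 ≤ a2 * ((q2 - c2) + Pm) ^ 2 := by positivity
    have hring : MakerProfit2 l1 l2 a1 a2 (Pm * η ^ 2) 0 0 Pm -
        MakerProfit2 l1 l2 a1 a2 q1 c1 q2 c2 =
        ((l1 - 2 * a1 * Pm * η ^ 2) * (Pm * η ^ 2 - (q1 - c1))
          - (l2 + 2 * a2 * Pm) * ((q2 - c2) + Pm))
        + a1 * (Pm * η ^ 2 - (q1 - c1)) ^ 2 + a2 * ((q2 - c2) + Pm) ^ 2 := by
      simp only [MakerProfit2]; ring
    linarith [h1, h2, h3, h4, hring]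
end

section
/- In the two-interval price-maker model, in the interior-withholding regime (λ̄_1 > λ̄_2/η² and λ̄_1 − 2α_1 P̄η² < (λ̄_2 + 2α_2 P̄)/η² with α_1, α_2 > 0), the realized prices at the price-maker optimum, λ'_1 = λ̄_1 − α_1 p*_1 and λ'_2 = λ̄_2 + α_2 b*_2 with p*_1 = (λ̄_1 − λ̄_2/η²)/(2(α_1 + α_2/η⁴)) and b*_2 = p*_1/η², still satisfy λ'_1 > λ'_2/η². -/
/-!
Discharging `p` in interval 1 and charging `p / η²` in interval 2 lowers the spread
`λ₁ − λ₂ / η²` by `(α₁ + α₂ / η⁴) p`. The maker's optimal `p₁*` is exactly the point where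
this loss is half the nominal spread, so the realized spread is half the nominal one, hence
still positive.
-/

lemma realized_spread_eq {K : Type*} [Field K] (l1 l2 a1 a2 p k : K) (hk : k ≠ 0) :
    (l1 - a1 * p) - (l2 + a2 * (p / k)) / k = (l1 - l2 / k) - (a1 + a2 / k ^ 2) * p := by
  field_simp
  ring

lemma sub_mul_div_two_mul_cancel {K : Type*} [Field K] [NeZero (2 : K)] (s d : K)
    (hd : d ≠ 0) : s - d * (s / (2 * d)) = s / 2 := by
  field_simp
  ring

theorem maker_realized_prices_exceed_threshold_general
    (η l1 l2 a1 a2 : ℝ) (hη : 0 < η)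
    (ha1 : 0 < a1) (ha2 : 0 < a2)
    (hspread : l1 > l2 / η ^ 2) :
    let p1 := (l1 - l2 / η ^ 2) / (2 * (a1 + a2 / η ^ 4))
    let b2 := p1 / η ^ 2
    l1 - a1 * p1 > (l2 + a2 * b2) / η ^ 2 := by
  intro p1 b2
  have hspread_half : (l1 - a1 * p1) - (l2 + a2 * b2) / η ^ 2 = (l1 - l2 / η ^ 2) / 2 := by
    rw [realized_spread_eq _ _ _ _ _ _ (by positivity), ← pow_mul]
    exact sub_mul_div_two_mul_cancel _ _ (by positivity)
  linarith

/-- in the interior-withholding regime of the two-interval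
price-maker model, the realized prices `λ'₁ = λ̄₁ − α₁p₁*` and
`λ'₂ = λ̄₂ + α₂b₂*` (with `p₁* = (λ̄₁ − λ̄₂/η²)/(2(α₁ + α₂/η⁴))` and
`b₂* = p₁*/η²`) still satisfy `λ'₁ > λ'₂/η²`. -/
theorem maker_realized_prices_exceed_threshold
    (η Pm l1 l2 a1 a2 : ℝ) (hη : 0 < η) (hη1 : η < 1) (hPm : 0 < Pm)
    (hl1 : 0 ≤ l1) (hl2 : 0 ≤ l2) (ha1 : 0 < a1) (ha2 : 0 < a2)
    (hspread : l1 > l2 / η ^ 2)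
    (hmr : l1 - 2 * a1 * Pm * η ^ 2 < (l2 + 2 * a2 * Pm) / η ^ 2) :
    let p1 := (l1 - l2 / η ^ 2) / (2 * (a1 + a2 / η ^ 4))
    let b2 := p1 / η ^ 2
    l1 - a1 * p1 > (l2 + a2 * b2) / η ^ 2 :=
  maker_realized_prices_exceed_threshold_general η l1 l2 a1 a2 hη ha1 ha2 hspread
end
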